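/- Let $X$ be an integral scheme over an algebraically closed field $k$, and let $\mathcal{L}$ and $\mathcal{M}$ be two coherent subsheaves of the sheaf of total quotient rings $\mathcal{K}_X$ with $h^0(\mathcal{L}) \ge 1$ and $h^0(\mathcal{M}) \ge 1$. Then $h^0(\mathcal{L} \cdot \mathcal{M}) \ge h^0(\mathcal{L}) + h^0(\mathcal{M}) - 1$, where $\mathcal{L} \cdot \mathcal{M}$ denotes the product of the two subsheaves inside $\mathcal{K}_X$. -/
import Mathlib




open Module Submodule

section Hopf
variable {k K : Type*} [Field k] [IsAlgClosed k] [Field K] [Algebra k K]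

/-- multiplication by a nonzero element as a `k`-linear equiv of `K` -/
noncomputable def mulLeftEquiv {e : K} (he : e ≠ 0) : K ≃ₗ[k] K :=
  LinearEquiv.ofLinear (LinearMap.mulLeft k e) (LinearMap.mulLeft k e⁻¹)
    (by ext x; simp [← mul_assoc, mul_inv_cancel₀ he])
    (by ext x; simp [← mul_assoc, inv_mul_cancel₀ he])

@[simp] lemma mulLeftEquiv_apply {e : K} (he : e ≠ 0) (x : K) : mulLeftEquiv (k := k) he x = e * x := rfl

/-- Key lemma (linear Dyson transform / Hopf's lemma): for nonzero finite-dimensional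
`k`-subspaces `A B` of a field extension `K` of an algebraically closed field `k`, with `1 ∈ B`,
`dim A + dim B ≤ dim (A*B) + 1`. -/
theorem hopf_key : ∀ (n : ℕ) (A B : Submodule k K), Module.Finite k A → Module.Finite k B →
    A ≠ ⊥ → (1 : K) ∈ B → finrank k B = n →
    finrank k A + finrank k B ≤ finrank k (A * B) + 1 := by
  intro n
  induction n using Nat.strong_induction_on with
  | _ n IH =>
    intro A B hAfin hBfin hAbot hB1 hBn
    haveI := hAfin; haveI := hBfin
    haveI : Module.Finite k (A * B) := Module.Finite.iff_fg.mpr ((Module.Finite.iff_fg.mp hAfin).mul (Module.Finite.iff_fg.mp hBfin))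
    by_cases hstuck : ∀ e ∈ A, ∀ b ∈ B, e * b ∈ A
    · -- stuck case: A * B ≤ A, so B consists of algebraic (hence base-field) elements
      have hBk : ∀ b ∈ B, ∃ c : k, b = algebraMap k K c := by
        intro b hb
        have hint : IsIntegral k b := by
          refine isIntegral_of_smul_mem_submodule (R := k) (A := K) (M := K) A hAbot
            (Module.Finite.iff_fg.mp hAfin) b ?_
          intro a ha
          have := hstuck a ha b hb
          simpa [smul_eq_mul, mul_comm] using this
        have hirr := minpoly.irreducible hint
        have hdeg : (minpoly k b).degree = 1 := IsAlgClosed.degree_eq_one_of_irreducible k hirr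
        obtain ⟨c, hc⟩ := (minpoly.degree_eq_one_iff).mp hdeg
        exact ⟨c, hc.symm⟩
      -- B = span {1}
      have hBle : B ≤ Submodule.span k {(1 : K)} := by
        intro b hb
        obtain ⟨c, rfl⟩ := hBk b hb
        rw [Algebra.algebraMap_eq_smul_one]
        exact Submodule.smul_mem _ _ (Submodule.mem_span_singleton_self _)
      have hBeq : B = Submodule.span k {(1 : K)} :=
        le_antisymm hBle ((Submodule.span_singleton_le_iff_mem _ _).mpr hB1)
      have hBr : finrank k B = 1 := by
        rw [hBeq]; exact finrank_span_singleton one_ne_zero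
      have hAle : A ≤ A * B := by
        intro a ha
        simpa using Submodule.mul_mem_mul ha hB1
      have := Submodule.finrank_mono (t := A * B) hAle
      omega
    · push_neg at hstuck
      obtain ⟨e, he, b₁, hb₁, heb⟩ := hstuck
      have he0 : e ≠ 0 := by rintro rfl; exact heb (by simpa using A.zero_mem)
      have hei0 : e⁻¹ ≠ 0 := inv_ne_zero he0
      set φ := mulLeftEquiv (k := k) he0 with hφ
      set ψ := mulLeftEquiv (k := k) hei0 with hψ
      set eB : Submodule k K := B.map (φ : K →ₗ[k] K) with heB
      set B' : Submodule k K := B ⊓ A.map (ψ : K →ₗ[k] K) with hB'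
      set A' : Submodule k K := A ⊔ eB with hA'
      -- finiteness
      haveI : Module.Finite k eB := Module.Finite.map _ _
      haveI : Module.Finite k B' := Submodule.finiteDimensional_of_le (inf_le_left : B' ≤ B)
      haveI : Module.Finite k A' := Submodule.finiteDimensional_sup A eB
      -- A ⊓ eB = φ(B')
      have hinf : A ⊓ eB = B'.map (φ : K →ₗ[k] K) := by
        apply le_antisymm
        · rintro x ⟨hxA, y, hy, rfl⟩
          refine ⟨y, ⟨hy, ⟨e * y, hxA, ?_⟩⟩, rfl⟩
          simp [ψ, ← mul_assoc, inv_mul_cancel₀ he0]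
        · rintro _ ⟨y, ⟨hyB, a, haA, rfl⟩, rfl⟩
          constructor
          · simpa [φ, ψ, ← mul_assoc, mul_inv_cancel₀ he0] using haA
          · exact ⟨ψ a, hyB, rfl⟩
      have hrank_eB : finrank k eB = finrank k B := LinearEquiv.finrank_map_eq φ B
      have hrank_inf : finrank k (B'.map (φ : K →ₗ[k] K)) = finrank k B' :=
        LinearEquiv.finrank_map_eq φ B'
      have hsum : finrank k A' + finrank k B' = finrank k A + finrank k B := by
        have := Submodule.finrank_sup_add_finrank_inf_eq A eB
        rw [hinf, hrank_inf, hrank_eB] at this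
        exact this
      -- B' < B
      have hb₁notB' : b₁ ∉ B' := by
        rintro ⟨-, a, haA, rfl⟩
        exact heb (by simpa [ψ, ← mul_assoc, mul_inv_cancel₀ he0] using haA)
      have hB'lt : B' < B := lt_of_le_of_ne inf_le_left (fun h => hb₁notB' (h ▸ hb₁))
      have hB'rank : finrank k B' < finrank k B := Submodule.finrank_lt_finrank_of_lt hB'lt
      -- 1 ∈ B'
      have hB'1 : (1 : K) ∈ B' := ⟨hB1, ⟨e, he, by simp [ψ, inv_mul_cancel₀ he0]⟩⟩
      -- A' ≠ ⊥
      have hA'bot : A' ≠ ⊥ := by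
        intro h
        exact hAbot (le_bot_iff.mp (h ▸ (le_sup_left : A ≤ A')))
      -- A' * B' ≤ A * B
      have hmul : A' * B' ≤ A * B := by
        rw [Submodule.mul_le]
        intro x hx b' hb'
        obtain ⟨hb'B, a₂, ha₂, ha₂'⟩ := hb'
        rw [Submodule.mem_sup] at hx
        obtain ⟨a, haA, y, hy, rfl⟩ := hx
        obtain ⟨b, hbB, rfl⟩ := hy
        have h1 : a * b' ∈ A * B := Submodule.mul_mem_mul haA hb'B
        have h2 : (φ b) * b' ∈ A * B := by
          have : (φ b) * b' = a₂ * b := by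
            rw [← ha₂']
            show (e * b) * (e⁻¹ * a₂) = a₂ * b
            rw [mul_mul_mul_comm, mul_inv_cancel₀ he0, one_mul, mul_comm]
          rw [this]
          exact Submodule.mul_mem_mul ha₂ hbB
        simpa [add_mul] using Submodule.add_mem _ h1 h2
      have hIH := IH (finrank k B') (hBn ▸ hB'rank) A' B' ‹_› ‹_› hA'bot hB'1 rfl
      have hmono : finrank k (A' * B') ≤ finrank k (A * B) := Submodule.finrank_mono hmul
      omega

end Hopf

/-- Abstract data of an integral scheme `X` over an algebraically closed field `k` together
with its coherent subsheaves of the sheaf of total quotient rings `𝒦_X` (the constant sheaf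
of the function field `K`): each such subsheaf has a space of global sections which is a
`k`-subspace of `K` (finite-dimensional by coherence and properness of sections), and the
product of two subsheaves inside `𝒦_X` has global sections containing all products of
global sections (multiplication being taken in the function field). -/
structure CoherentSubsheavesOfTotalQuotientRings (k : Type*) [Field k] [IsAlgClosed k] where
  /-- the function field of the integral scheme `X` -/
  K : Type*
  [fieldK : Field K]
  [algK : Algebra k K]
  /-- coherent subsheaves of `𝒦_X` -/
  Sheaf : Type*
  /-- the product `ℒ ⬝ ℳ` of two subsheaves, taken inside `𝒦_X` -/
  mul : Sheaf → Sheaf → Sheaf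
  /-- global sections of a subsheaf of `𝒦_X`, a `k`-subspace of the function field -/
  H0 : Sheaf → Submodule k K
  /-- products (in `𝒦(X)`) of global sections are global sections of the product sheaf -/
  h0_mul_le : ∀ L M : Sheaf, H0 L * H0 M ≤ H0 (mul L M)
  /-- coherence: the spaces of global sections are finite dimensional over `k` -/
  finite : ∀ L : Sheaf, Module.Finite k (H0 L)

attribute [instance] CoherentSubsheavesOfTotalQuotientRings.fieldK
  CoherentSubsheavesOfTotalQuotientRings.algK
  CoherentSubsheavesOfTotalQuotientRings.finite

/-- **(Corollary 2.2)** If `X` is an integral scheme over an algebraically closed field `k`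
and `ℒ`, `ℳ` are coherent subsheaves of the sheaf of total quotient rings `𝒦_X` with
`h⁰(ℒ) ≥ 1` and `h⁰(ℳ) ≥ 1`, then `h⁰(ℒ ⬝ ℳ) ≥ h⁰(ℒ) + h⁰(ℳ) - 1`. -/
theorem h0_mul_ge
    (k : Type*) [Field k] [IsAlgClosed k]
    (X : CoherentSubsheavesOfTotalQuotientRings k)
    (L M : X.Sheaf)
    (hL : 1 ≤ Module.finrank k (X.H0 L))
    (hM : 1 ≤ Module.finrank k (X.H0 M)) :
    Module.finrank k (X.H0 L) + Module.finrank k (X.H0 M) - 1 ≤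
      Module.finrank k (X.H0 (X.mul L M)) := by

  classical
  set A := X.H0 L with hA
  set B₀ := X.H0 M with hB0
  haveI : Module.Finite k A := X.finite L
  haveI : Module.Finite k B₀ := X.finite M
  haveI : Module.Finite k (X.H0 (X.mul L M)) := X.finite (X.mul L M)
  have hAbot : A ≠ ⊥ := by
    intro h
    rw [h, finrank_bot] at hL
    omega
  have hBbot : B₀ ≠ ⊥ := by
    intro h
    rw [h, finrank_bot] at hM
    omega
  obtain ⟨b₀, hb₀, hb₀ne⟩ := Submodule.ne_bot_iff _ |>.mp hBbot
  have hbi : (b₀⁻¹ : X.K) ≠ 0 := inv_ne_zero hb₀ne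
  set ψ := mulLeftEquiv (k := k) hbi with hψ
  set B : Submodule k X.K := B₀.map (ψ : X.K →ₗ[k] X.K) with hB
  haveI : Module.Finite k B := Module.Finite.map _ _
  have hB1 : (1 : X.K) ∈ B := ⟨b₀, hb₀, by simp [ψ, inv_mul_cancel₀ hb₀ne]⟩
  have hBrank : finrank k B = finrank k B₀ := LinearEquiv.finrank_map_eq ψ B₀
  haveI : Module.Finite k (A * B₀) :=
    Module.Finite.iff_fg.mpr ((Module.Finite.iff_fg.mp ‹Module.Finite k A›).mul
      (Module.Finite.iff_fg.mp ‹Module.Finite k B₀›))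
  haveI : Module.Finite k ((A * B₀).map (ψ : X.K →ₗ[k] X.K)) := Module.Finite.map _ _
  have hle : A * B ≤ (A * B₀).map (ψ : X.K →ₗ[k] X.K) := by
    rw [Submodule.mul_le]
    rintro a ha _ ⟨b, hb, rfl⟩
    refine ⟨a * b, Submodule.mul_mem_mul ha hb, ?_⟩
    show b₀⁻¹ * (a * b) = a * (b₀⁻¹ * b)
    ring
  have h1 : finrank k (A * B) ≤ finrank k ((A * B₀).map (ψ : X.K →ₗ[k] X.K)) :=
    Submodule.finrank_mono hle
  have h2 : finrank k ((A * B₀).map (ψ : X.K →ₗ[k] X.K)) = finrank k (A * B₀) :=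
    LinearEquiv.finrank_map_eq ψ (A * B₀)
  have h3 : finrank k (A * B₀) ≤ finrank k (X.H0 (X.mul L M)) :=
    Submodule.finrank_mono (X.h0_mul_le L M)
  have hkey := hopf_key (finrank k B) A B ‹_› ‹_› hAbot hB1 rfl
  rw [hBrank] at hkey
  omega
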